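/- Let 0 ≤ ε ≤ 1/2, let P be the n-fold PR box with error ε, let f : {0,1}^n → {0,1}, and let g be the maximum-likelihood function of f(X) given Y at input (0…0, 0…0). Then there exists a box partition w of P such that δ_w^f(0…0,0…0) ≥ (1/2) · δ, where δ := max( δ_f, δ_g ) with δ_f := |Σ_{x : f(x)=0, y} P(x,y|0…0,0…0) − 1/2| and δ_g := |Σ_{x, y : g(y)=0} P(x,y|0…0,0…0) − 1/2|. -/
import Mathlib


open Finset

/-- A box (non-signaling bipartite system). -/
structure IsBox {X Y U V : Type} [Fintype X] [Fintype Y]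
    (P : X → Y → U → V → ℝ) : Prop where
  nonneg : ∀ x y u v, 0 ≤ P x y u v
  norm : ∀ u v, ∑ x, ∑ y, P x y u v = 1
  nsA : ∀ y u u' v, ∑ x, P x y u v = ∑ x, P x y u' v
  nsB : ∀ x u v v', ∑ y, P x y u v = ∑ y, P x y u v'

/-- A box partition of a box `P`. -/
structure IsBoxPartition {X Y U V Z : Type} [Fintype X] [Fintype Y] [Fintype Z]
    (P : X → Y → U → V → ℝ) (p : Z → ℝ) (Q : Z → X → Y → U → V → ℝ) : Prop where
  weight_nonneg : ∀ z, 0 ≤ p z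
  weight_sum : ∑ z, p z = 1
  box : ∀ z, IsBox (Q z)
  decomp : ∀ x y u v, ∑ z, p z * Q z x y u v = P x y u v

/-- The unbiased PR box with error ε. -/
noncomputable def PRbox (ε : ℝ) (x y u v : Bool) : ℝ :=
  if xor x y = (u && v) then (1 - ε) / 2 else ε / 2

/-- The n-fold (product) PR box with error ε. -/
noncomputable def PRn (ε : ℝ) (n : ℕ) (x y u v : Fin n → Bool) : ℝ :=
  ∏ i, PRbox ε (x i) (y i) (u i) (v i)

/-- The non-uniformity of the key bit `f(X)` given a box partition `(p, Q)`,
at inputs `(u, v)`. -/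
noncomputable def nonUniformity {n : ℕ} {Z : Type} [Fintype Z]
    (p : Z → ℝ)
    (Q : Z → (Fin n → Bool) → (Fin n → Bool) → (Fin n → Bool) → (Fin n → Bool) → ℝ)
    (f : (Fin n → Bool) → Bool) (u v : Fin n → Bool) : ℝ :=
  (1/2) * ∑ z, p z *
    |(∑ x ∈ univ.filter (fun x => f x = false), ∑ y, Q z x y u v) -
      ∑ x ∈ univ.filter (fun x => f x = true), ∑ y, Q z x y u v|

lemma PRbox_nonneg {ε : ℝ} (hε0 : 0 ≤ ε) (hε1 : ε ≤ 1/2) (x y u v : Bool) :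
    0 ≤ PRbox ε x y u v := by
  unfold PRbox; split <;> nlinarith

lemma PRbox_sum_x (ε : ℝ) (y u v : Bool) :
    PRbox ε false y u v + PRbox ε true y u v = 1/2 := by
  cases y <;> cases u <;> cases v <;> simp [PRbox] <;> ring

lemma PRbox_sum_y (ε : ℝ) (x u v : Bool) :
    PRbox ε x false u v + PRbox ε x true u v = 1/2 := by
  cases x <;> cases u <;> cases v <;> simp [PRbox] <;> ring

lemma PRn_nonneg {ε : ℝ} (hε0 : 0 ≤ ε) (hε1 : ε ≤ 1/2) {n : ℕ} (x y u v : Fin n → Bool) :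
    0 ≤ PRn ε n x y u v :=
  Finset.prod_nonneg fun i _ => PRbox_nonneg hε0 hε1 _ _ _ _

lemma sum_x_PRn (ε : ℝ) (n : ℕ) (y u v : Fin n → Bool) :
    ∑ x, PRn ε n x y u v = (1/2)^n := by
  unfold PRn
  rw [← Fintype.piFinset_univ,
    ← Finset.prod_univ_sum (fun _ => (univ : Finset Bool))
      (fun i b => PRbox ε b (y i) (u i) (v i))]
  rw [show ((1:ℝ)/2)^n = ∏ _i : Fin n, (1/2 : ℝ) by simp]
  exact Finset.prod_congr rfl fun i _ => by
    rw [Fintype.sum_bool, add_comm]; exact PRbox_sum_x ε _ _ _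

lemma sum_y_PRn (ε : ℝ) (n : ℕ) (x u v : Fin n → Bool) :
    ∑ y, PRn ε n x y u v = (1/2)^n := by
  unfold PRn
  rw [← Fintype.piFinset_univ,
    ← Finset.prod_univ_sum (fun _ => (univ : Finset Bool))
      (fun i b => PRbox ε (x i) b (u i) (v i))]
  rw [show ((1:ℝ)/2)^n = ∏ _i : Fin n, (1/2 : ℝ) by simp]
  exact Finset.prod_congr rfl fun i _ => by
    rw [Fintype.sum_bool, add_comm]; exact PRbox_sum_y ε _ _ _

lemma PRn_u0 (ε : ℝ) (n : ℕ) (x y v : Fin n → Bool) :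
    PRn ε n x y (fun _ => false) v = PRn ε n x y (fun _ => false) (fun _ => false) := by
  unfold PRn
  exact Finset.prod_congr rfl fun i _ => by simp [PRbox]

noncomputable def pp (ε : ℝ) (n : ℕ) (x y : Fin n → Bool) : ℝ :=
  PRn ε n x y (fun _ => false) (fun _ => false)

noncomputable def pZero (ε : ℝ) (n : ℕ) (f : (Fin n → Bool) → Bool) (y : Fin n → Bool) : ℝ :=
  ∑ x ∈ univ.filter (fun x => f x = false), pp ε n x y

noncomputable def pOne (ε : ℝ) (n : ℕ) (f : (Fin n → Bool) → Bool) (y : Fin n → Bool) : ℝ :=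
  ∑ x ∈ univ.filter (fun x => f x = true), pp ε n x y

noncomputable def mY (ε : ℝ) (n : ℕ) (f : (Fin n → Bool) → Bool) (y : Fin n → Bool) : ℝ :=
  min (pZero ε n f y) (pOne ε n f y)

noncomputable def D0 (ε : ℝ) (n : ℕ) (f : (Fin n → Bool) → Bool) (x y : Fin n → Bool) : ℝ :=
  if f x = false then mY ε n f y * pp ε n x y / pZero ε n f y
  else -(mY ε n f y * pp ε n x y / pOne ε n f y)

noncomputable def QQ (ε : ℝ) (n : ℕ) (f : (Fin n → Bool) → Bool)
    (z : Bool) (x y u v : Fin n → Bool) : ℝ :=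
  PRn ε n x y u v +
    (if u = (fun _ => false) then (if z then -(D0 ε n f x y) else D0 ε n f x y) else 0)

variable {ε : ℝ} {n : ℕ} {f : (Fin n → Bool) → Bool}

lemma filter_not_false :
    (univ.filter (fun x => ¬ f x = false)) = univ.filter (fun x => f x = true) := by
  apply Finset.filter_congr; intro x _; simp

lemma pp_nonneg (hε0 : 0 ≤ ε) (hε1 : ε ≤ 1/2) (x y : Fin n → Bool) : 0 ≤ pp ε n x y :=
  PRn_nonneg hε0 hε1 _ _ _ _

lemma pZero_nonneg (hε0 : 0 ≤ ε) (hε1 : ε ≤ 1/2) (y : Fin n → Bool) : 0 ≤ pZero ε n f y :=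
  Finset.sum_nonneg fun x _ => pp_nonneg hε0 hε1 x y

lemma pOne_nonneg (hε0 : 0 ≤ ε) (hε1 : ε ≤ 1/2) (y : Fin n → Bool) : 0 ≤ pOne ε n f y :=
  Finset.sum_nonneg fun x _ => pp_nonneg hε0 hε1 x y

lemma mY_nonneg (hε0 : 0 ≤ ε) (hε1 : ε ≤ 1/2) (y : Fin n → Bool) : 0 ≤ mY ε n f y :=
  le_min (pZero_nonneg hε0 hε1 y) (pOne_nonneg hε0 hε1 y)

lemma p01_sum (y : Fin n → Bool) : pZero ε n f y + pOne ε n f y = (1/2)^n := by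
  unfold pZero pOne
  rw [← filter_not_false, Finset.sum_filter_add_sum_filter_not]
  exact sum_x_PRn ε n y _ _

lemma sum_D0_false (hε0 : 0 ≤ ε) (hε1 : ε ≤ 1/2) (y : Fin n → Bool) :
    ∑ x ∈ univ.filter (fun x => f x = false), D0 ε n f x y = mY ε n f y := by
  have h : ∀ x ∈ univ.filter (fun x => f x = false),
      D0 ε n f x y = mY ε n f y / pZero ε n f y * pp ε n x y := by
    intro x hx
    simp only [mem_filter] at hx
    unfold D0; rw [if_pos hx.2]; ring
  rw [Finset.sum_congr rfl h, ← Finset.mul_sum]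
  show mY ε n f y / pZero ε n f y * pZero ε n f y = mY ε n f y
  by_cases h0 : pZero ε n f y = 0
  · have hm : mY ε n f y = 0 := by
      unfold mY; rw [h0]; exact min_eq_left (pOne_nonneg hε0 hε1 y)
    rw [h0, hm]; simp
  · field_simp

lemma sum_D0_true (hε0 : 0 ≤ ε) (hε1 : ε ≤ 1/2) (y : Fin n → Bool) :
    ∑ x ∈ univ.filter (fun x => f x = true), D0 ε n f x y = -(mY ε n f y) := by
  have h : ∀ x ∈ univ.filter (fun x => f x = true),
      D0 ε n f x y = -(mY ε n f y / pOne ε n f y * pp ε n x y) := by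
    intro x hx
    simp only [mem_filter] at hx
    have : ¬ (f x = false) := by simp [hx.2]
    unfold D0; rw [if_neg this]; ring
  rw [Finset.sum_congr rfl h, Finset.sum_neg_distrib, ← Finset.mul_sum]
  show -(mY ε n f y / pOne ε n f y * pOne ε n f y) = -(mY ε n f y)
  by_cases h0 : pOne ε n f y = 0
  · have hm : mY ε n f y = 0 := by
      unfold mY; rw [h0]; exact min_eq_right (pZero_nonneg hε0 hε1 y)
    rw [h0, hm]; simp
  · field_simp

lemma sum_D0 (hε0 : 0 ≤ ε) (hε1 : ε ≤ 1/2) (y : Fin n → Bool) : ∑ x, D0 ε n f x y = 0 := by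
  rw [← Finset.sum_filter_add_sum_filter_not univ (fun x => f x = false), filter_not_false,
    sum_D0_false hε0 hε1, sum_D0_true hε0 hε1]
  ring

lemma abs_D0_le (hε0 : 0 ≤ ε) (hε1 : ε ≤ 1/2) (x y : Fin n → Bool) :
    |D0 ε n f x y| ≤ pp ε n x y := by
  have hp := pp_nonneg hε0 hε1 x y
  have hm0 : 0 ≤ mY ε n f y := mY_nonneg hε0 hε1 y
  have hmL : mY ε n f y ≤ pZero ε n f y := min_le_left _ _
  have hmR : mY ε n f y ≤ pOne ε n f y := min_le_right _ _
  unfold D0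
  split
  · rw [abs_of_nonneg (div_nonneg (mul_nonneg hm0 hp) (pZero_nonneg hε0 hε1 y))]
    by_cases h0 : pZero ε n f y = 0
    · rw [h0, div_zero]; exact hp
    · have h0' : 0 < pZero ε n f y := lt_of_le_of_ne (pZero_nonneg hε0 hε1 y) (Ne.symm h0)
      rw [div_le_iff₀ h0']
      nlinarith [hmL, hp]
  · rw [abs_neg, abs_of_nonneg (div_nonneg (mul_nonneg hm0 hp) (pOne_nonneg hε0 hε1 y))]
    by_cases h0 : pOne ε n f y = 0
    · rw [h0, div_zero]; exact hp
    · have h0' : 0 < pOne ε n f y := lt_of_le_of_ne (pOne_nonneg hε0 hε1 y) (Ne.symm h0)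
      rw [div_le_iff₀ h0']
      nlinarith [hmR, hp]

lemma sum_sum_PRn (u v : Fin n → Bool) : ∑ x, ∑ y, PRn ε n x y u v = 1 := by
  rw [Finset.sum_congr rfl fun x _ => sum_y_PRn ε n x u v, Finset.sum_const, card_univ]
  rw [Fintype.card_fun]
  simp only [Fintype.card_bool, Fintype.card_fin, nsmul_eq_mul, Nat.cast_pow, Nat.cast_ofNat]
  rw [← mul_pow]; norm_num

lemma sum_sum_D0 (hε0 : 0 ≤ ε) (hε1 : ε ≤ 1/2) : ∑ x, ∑ y, D0 ε n f x y = 0 := by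
  rw [Finset.sum_comm]
  exact Finset.sum_eq_zero fun y _ => sum_D0 hε0 hε1 y

lemma QQ_u0 (z : Bool) (x y v : Fin n → Bool) :
    QQ ε n f z x y (fun _ => false) v
      = PRn ε n x y (fun _ => false) v + (if z then -(D0 ε n f x y) else D0 ε n f x y) := by
  unfold QQ; rw [if_pos rfl]

lemma QQ_ne (z : Bool) (x y u v : Fin n → Bool) (hu : ¬ u = (fun _ => false)) :
    QQ ε n f z x y u v = PRn ε n x y u v := by
  unfold QQ; rw [if_neg hu, add_zero]

lemma sum_x_QQ (hε0 : 0 ≤ ε) (hε1 : ε ≤ 1/2) (z : Bool) (y u v : Fin n → Bool) :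
    ∑ x, QQ ε n f z x y u v = (1/2)^n := by
  by_cases hu : u = (fun _ : Fin n => false)
  · subst hu
    simp only [QQ_u0, Finset.sum_add_distrib]
    rw [sum_x_PRn]
    cases z
    · simp only [Bool.false_eq_true, if_false, sum_D0 hε0 hε1, add_zero]
    · simp only [if_true, Finset.sum_neg_distrib, sum_D0 hε0 hε1, neg_zero, add_zero]
  · rw [Finset.sum_congr rfl fun x _ => QQ_ne z x y u v hu]
    exact sum_x_PRn ε n y u v

lemma QQ_box (hε0 : 0 ≤ ε) (hε1 : ε ≤ 1/2) (z : Bool) : IsBox (QQ ε n f z) where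
  nonneg := by
    intro x y u v
    by_cases hu : u = (fun _ : Fin n => false)
    · subst hu
      rw [QQ_u0, PRn_u0]
      have h := abs_le.mp (abs_D0_le (f := f) hε0 hε1 x y)
      unfold pp at h
      cases z
      · simp only [Bool.false_eq_true, if_false]; linarith [h.1]
      · simp only [if_true]; linarith [h.2]
    · rw [QQ_ne z x y u v hu]
      exact PRn_nonneg hε0 hε1 x y u v
  norm := by
    intro u v
    by_cases hu : u = (fun _ : Fin n => false)
    · subst hu
      simp only [QQ_u0, Finset.sum_add_distrib]
      rw [sum_sum_PRn]
      cases z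
      · simp only [Bool.false_eq_true, if_false, sum_sum_D0 hε0 hε1, add_zero]
      · simp only [if_true, Finset.sum_neg_distrib, sum_sum_D0 hε0 hε1, neg_zero, add_zero]
    · rw [Finset.sum_congr rfl fun x _ =>
        Finset.sum_congr rfl fun y _ => QQ_ne z x y u v hu]
      exact sum_sum_PRn u v
  nsA := by
    intro y u u' v
    rw [sum_x_QQ hε0 hε1, sum_x_QQ hε0 hε1]
  nsB := by
    intro x u v v'
    unfold QQ
    simp only [Finset.sum_add_distrib]
    rw [sum_y_PRn, sum_y_PRn]

lemma QQ_partition (hε0 : 0 ≤ ε) (hε1 : ε ≤ 1/2) :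
    IsBoxPartition (PRn ε n) (fun _ : Bool => (1/2 : ℝ)) (QQ ε n f) where
  weight_nonneg := fun _ => by norm_num
  weight_sum := by rw [Fintype.sum_bool]; norm_num
  box := QQ_box hε0 hε1
  decomp := by
    intro x y u v
    rw [Fintype.sum_bool]
    unfold QQ
    by_cases hu : u = (fun _ : Fin n => false)
    · rw [if_pos hu, if_pos hu]; simp; ring
    · rw [if_neg hu, if_neg hu]; ring

lemma sum_const_half (n : ℕ) : ∑ _y : Fin n → Bool, ((1:ℝ)/2)^n = 1 := by
  rw [Finset.sum_const, card_univ, Fintype.card_fun]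
  simp only [Fintype.card_bool, Fintype.card_fin, nsmul_eq_mul, Nat.cast_pow, Nat.cast_ofNat]
  rw [← mul_pow]; norm_num


set_option maxHeartbeats 1000000 in
/-- There exists a box partition `w` of the n-fold PR box with error ε whose
non-uniformity of `f(X)` at the all-zero inputs is at least `δ/2`, where
`δ = max(δ_f, δ_g)` is the larger of the distances from uniform of the bits `f(X)`
and `g(Y)`, and `g` is the maximum-likelihood function of `f(X)` given `Y`. -/
theorem nonuniformity_ge_half_max_bias (ε : ℝ) (hε0 : 0 ≤ ε) (hε1 : ε ≤ 1/2)
    (n : ℕ) (f g : (Fin n → Bool) → Bool)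
    (hg : ∀ y, g y =
      if (∑ x ∈ univ.filter (fun x => f x = true),
            PRn ε n x y (fun _ => false) (fun _ => false))
          ≤ ∑ x ∈ univ.filter (fun x => f x = false),
              PRn ε n x y (fun _ => false) (fun _ => false)
      then false else true) :
    ∃ (Z : Type) (iZ : Fintype Z) (p : Z → ℝ)
      (Q : Z → (Fin n → Bool) → (Fin n → Bool) → (Fin n → Bool) → (Fin n → Bool) → ℝ),
      @IsBoxPartition _ _ _ _ Z _ _ iZ (PRn ε n) p Q ∧
      (1/2) * max
          (|(∑ x ∈ univ.filter (fun x => f x = false), ∑ y,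
              PRn ε n x y (fun _ => false) (fun _ => false)) - 1/2|)
          (|(∑ y ∈ univ.filter (fun y => g y = false), ∑ x,
              PRn ε n x y (fun _ => false) (fun _ => false)) - 1/2|)
        ≤ @nonUniformity n Z iZ p Q f (fun _ => false) (fun _ => false) := by
  classical
  refine ⟨Bool, inferInstance, (fun _ => (1/2 : ℝ)), QQ ε n f,
    QQ_partition hε0 hε1, ?_⟩
  set q0 := (∑ x ∈ univ.filter (fun x => f x = false), ∑ y,
      PRn ε n x y (fun _ : Fin n => false) (fun _ : Fin n => false)) with hq0def
  set q1 := (∑ x ∈ univ.filter (fun x => f x = true), ∑ y,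
      PRn ε n x y (fun _ : Fin n => false) (fun _ : Fin n => false)) with hq1def
  set N0 := (∑ y ∈ univ.filter (fun y => g y = false), ∑ x,
      PRn ε n x y (fun _ : Fin n => false) (fun _ : Fin n => false)) with hN0def
  set M := (∑ y, mY ε n f y) with hMdef
  -- sums of D0 over the two filters
  have eF : (∑ x ∈ univ.filter (fun x => f x = false), ∑ y, D0 ε n f x y) = M := by
    rw [Finset.sum_comm, hMdef]
    exact Finset.sum_congr rfl fun y _ => sum_D0_false hε0 hε1 y
  have eT : (∑ x ∈ univ.filter (fun x => f x = true), ∑ y, D0 ε n f x y) = -M := by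
    rw [Finset.sum_comm, hMdef, ← Finset.sum_neg_distrib]
    exact Finset.sum_congr rfl fun y _ => sum_D0_true hε0 hε1 y
  have eq1 : ∀ (z : Bool) (x : Fin n → Bool),
      ∑ y, QQ ε n f z x y (fun _ => false) (fun _ => false)
      = (∑ y, PRn ε n x y (fun _ => false) (fun _ => false))
        + (if z then -(∑ y, D0 ε n f x y) else ∑ y, D0 ε n f x y) := by
    intro z x
    cases z
    · simp only [QQ_u0, Bool.false_eq_true, if_false, Finset.sum_add_distrib]
    · simp only [QQ_u0, if_true, Finset.sum_add_distrib, Finset.sum_neg_distrib]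
  have keyF : (∑ x ∈ univ.filter (fun x => f x = false), ∑ y,
        QQ ε n f false x y (fun _ => false) (fun _ => false))
      - (∑ x ∈ univ.filter (fun x => f x = true), ∑ y,
        QQ ε n f false x y (fun _ => false) (fun _ => false))
      = (q0 - q1) + 2*M := by
    rw [Finset.sum_congr rfl (fun x _ => eq1 false x),
      Finset.sum_congr rfl (fun x _ => eq1 false x)]
    simp only [Bool.false_eq_true, if_false, Finset.sum_add_distrib, eF, eT]
    rw [← hq0def, ← hq1def]; ring
  have keyT : (∑ x ∈ univ.filter (fun x => f x = false), ∑ y,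
        QQ ε n f true x y (fun _ => false) (fun _ => false))
      - (∑ x ∈ univ.filter (fun x => f x = true), ∑ y,
        QQ ε n f true x y (fun _ => false) (fun _ => false))
      = (q0 - q1) - 2*M := by
    rw [Finset.sum_congr rfl (fun x _ => eq1 true x),
      Finset.sum_congr rfl (fun x _ => eq1 true x)]
    simp only [if_true, Finset.sum_add_distrib, Finset.sum_neg_distrib, eF, eT]
    rw [← hq0def, ← hq1def]; ring
  have hval : nonUniformity (fun _ => (1/2:ℝ)) (QQ ε n f) f (fun _ => false) (fun _ => false)
      = 1/4 * (|q0 - q1 - 2*M| + |q0 - q1 + 2*M|) := by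
    unfold nonUniformity
    rw [Fintype.sum_bool, keyT, keyF]
    ring
  -- row facts
  have hmy : ∀ y, 2 * mY ε n f y
      = ((1:ℝ)/2)^n - |pZero ε n f y - pOne ε n f y| := by
    intro y
    have hs := p01_sum (ε := ε) (n := n) (f := f) y
    unfold mY
    rcases le_total (pZero ε n f y) (pOne ε n f y) with h | h
    · rw [min_eq_left h, abs_of_nonpos (by linarith)]; linarith
    · rw [min_eq_right h, abs_of_nonneg (by linarith)]; linarith
  have htc : ∀ y, |pZero ε n f y - pOne ε n f y| ≤ ((1:ℝ)/2)^n := by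
    intro y
    have := mY_nonneg (f := f) hε0 hε1 y
    linarith [hmy y]
  have hq0' : q0 = ∑ y, pZero ε n f y := by
    rw [hq0def, Finset.sum_comm]
    rfl
  have hq1' : q1 = ∑ y, pOne ε n f y := by
    rw [hq1def, Finset.sum_comm]
    rfl
  have hq01 : q0 + q1 = 1 := by
    rw [hq0', hq1', ← Finset.sum_add_distrib,
      Finset.sum_congr rfl fun y _ => p01_sum (ε := ε) (n := n) (f := f) y]
    exact sum_const_half n
  have hA : q0 - q1 = (∑ y, pZero ε n f y) - ∑ y, pOne ε n f y := by
    rw [hq0', hq1']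
  have ha' : 2*M = 1 - ∑ y, |pZero ε n f y - pOne ε n f y| := by
    rw [hMdef, Finset.mul_sum, Finset.sum_congr rfl fun y _ => hmy y,
      Finset.sum_sub_distrib, sum_const_half]
  have hM0 : 0 ≤ M := by
    rw [hMdef]
    exact Finset.sum_nonneg fun y _ => mY_nonneg hε0 hε1 y
  -- g characterization
  have hg' : ∀ y, g y = if pOne ε n f y ≤ pZero ε n f y then false else true := hg
  have hgy : ∀ y, g y = false ↔ pOne ε n f y ≤ pZero ε n f y := by
    intro y
    rw [hg' y]
    by_cases h : pOne ε n f y ≤ pZero ε n f y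
    · simp [h]
    · simp [h]
  -- N0 facts
  have hN0' : N0 = ∑ y ∈ univ.filter (fun y => g y = false), ((1:ℝ)/2)^n := by
    rw [hN0def]
    exact Finset.sum_congr rfl fun y _ => sum_x_PRn ε n y _ _
  have hite : ∑ y, (if g y = false then ((1:ℝ)/2)^n else -((1:ℝ)/2)^n) = 2*N0 - 1 := by
    have hpt : ∀ y : Fin n → Bool, (if g y = false then ((1:ℝ)/2)^n else -((1:ℝ)/2)^n)
        = 2 * (if g y = false then ((1:ℝ)/2)^n else 0) - (1/2)^n := by
      intro y; split <;> ring
    rw [Finset.sum_congr rfl fun y _ => hpt y, Finset.sum_sub_distrib, ← Finset.mul_sum,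
      ← Finset.sum_filter, sum_const_half, ← hN0']
  -- per-y inequalities
  have hper1 : ∀ y : Fin n → Bool, (if g y = false then ((1:ℝ)/2)^n else -((1:ℝ)/2)^n)
      ≤ (pZero ε n f y - pOne ε n f y) - |pZero ε n f y - pOne ε n f y| + (1/2)^n := by
    intro y
    by_cases hgy0 : g y = false
    · rw [if_pos hgy0]
      have ht0 : 0 ≤ pZero ε n f y - pOne ε n f y := by
        have := (hgy y).mp hgy0; linarith
      rw [abs_of_nonneg ht0]; linarith [htc y]
    · rw [if_neg hgy0]
      linarith [neg_abs_le (pZero ε n f y - pOne ε n f y), htc y]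
  have hper2 : ∀ y : Fin n → Bool, (if g y = false then -((1:ℝ)/2)^n else ((1:ℝ)/2)^n)
      ≤ -(pZero ε n f y - pOne ε n f y) - |pZero ε n f y - pOne ε n f y| + (1/2)^n := by
    intro y
    by_cases hgy0 : g y = false
    · rw [if_pos hgy0]
      linarith [le_abs_self (pZero ε n f y - pOne ε n f y), htc y]
    · rw [if_neg hgy0]
      have h' : ¬ pOne ε n f y ≤ pZero ε n f y := fun hc => hgy0 ((hgy y).mpr hc)
      have ht0 : pZero ε n f y - pOne ε n f y ≤ 0 := by
        have := not_le.mp h'; linarith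
      rw [abs_of_nonpos ht0]; linarith [htc y]
  have hite2 : ∑ y, (if g y = false then -((1:ℝ)/2)^n else ((1:ℝ)/2)^n) = -(2*N0 - 1) := by
    have hpt : ∀ y : Fin n → Bool, (if g y = false then -((1:ℝ)/2)^n else ((1:ℝ)/2)^n)
        = -(if g y = false then ((1:ℝ)/2)^n else -((1:ℝ)/2)^n) := by
      intro y; split <;> ring
    rw [Finset.sum_congr rfl fun y _ => hpt y, Finset.sum_neg_distrib, hite]
  have hsum1 : ∑ y, ((pZero ε n f y - pOne ε n f y)
        - |pZero ε n f y - pOne ε n f y| + (1/2)^n)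
      = (q0 - q1) + 2*M := by
    simp only [Finset.sum_add_distrib, Finset.sum_sub_distrib]
    rw [sum_const_half]
    linarith [ha', hA]
  have hsum2 : ∑ y, (-(pZero ε n f y - pOne ε n f y)
        - |pZero ε n f y - pOne ε n f y| + (1/2)^n)
      = -(q0 - q1) + 2*M := by
    simp only [Finset.sum_add_distrib, Finset.sum_sub_distrib, Finset.sum_neg_distrib]
    rw [sum_const_half]
    linarith [ha', hA]
  have hup : 2*N0 - 1 ≤ (q0 - q1) + 2*M := by
    rw [← hite, ← hsum1]
    exact Finset.sum_le_sum fun y _ => hper1 y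
  have hdn : -(2*N0 - 1) ≤ -(q0 - q1) + 2*M := by
    rw [← hite2, ← hsum2]
    exact Finset.sum_le_sum fun y _ => hper2 y
  -- final assembly
  rw [hval]
  have h2A : 2*|q0 - q1| ≤ |q0 - q1 - 2*M| + |q0 - q1 + 2*M| := by
    have h := abs_add_le (q0 - q1 - 2*M) (q0 - q1 + 2*M)
    have e : (q0 - q1 - 2*M) + (q0 - q1 + 2*M) = 2*(q0 - q1) := by ring
    rw [e, abs_mul, abs_two] at h
    linarith
  have h4M : 4*M ≤ |q0 - q1 - 2*M| + |q0 - q1 + 2*M| := by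
    have h := abs_add_le (q0 - q1 + 2*M) (-(q0 - q1 - 2*M))
    have e : (q0 - q1 + 2*M) + (-(q0 - q1 - 2*M)) = 4*M := by ring
    rw [e, abs_neg] at h
    calc 4*M = |4*M| := (abs_of_nonneg (by linarith)).symm
    _ ≤ _ := by linarith [h]
  have hd1 : |q0 - 1/2| ≤ 1/2 * (|q0 - q1 - 2*M| + |q0 - q1 + 2*M|) := by
    have e : q0 - 1/2 = (q0 - q1)/2 := by linarith
    rw [e, abs_div, abs_two]
    linarith
  have hd2 : |N0 - 1/2| ≤ 1/2 * (|q0 - q1 - 2*M| + |q0 - q1 + 2*M|) := by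
    have habs : |2*N0 - 1| ≤ |q0 - q1| + 2*M := by
      apply abs_le.mpr
      constructor
      · linarith [hdn, neg_le_abs (q0 - q1)]
      · linarith [hup, le_abs_self (q0 - q1)]
    have e : |2*N0 - 1| = 2 * |N0 - 1/2| := by
      rw [show (2*N0 - 1 : ℝ) = 2*(N0 - 1/2) by ring, abs_mul, abs_two]
    linarith
  have hmax := max_le hd1 hd2
  linarith
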